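/- With notation as above, the function $\varphi: \sigma^\vee \to \mathbf{R}$ defined by $\varphi(u) = \varphi_{\vec{j}}(u)$ for $u$ in the chamber $\widetilde{\tau}_{\vec{j}} = \mathrm{span}_{\geq 0}(\tau_{\vec{j}}, \epsilon)$ is well defined, and for $u$ whose image in $M_{\mathbf{R}}$ is represented by $\sum_{i,j} a_{ij} e_{ij}$ with real coefficients, one has $\varphi(u) = \sum_{i=1}^l \min_{1 \leq j \leq d}\{a_{ij}\}$. -/
import Mathlib


/-- Standard basis vector `e_{ij}` of `ℝ^{ld}`. -/
def eR (l d : ℕ) (p : Fin l × Fin d) : Fin l × Fin d → ℝ := Pi.single p 1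

/-- `ε_i = e_{i1} + ⋯ + e_{id}`. -/
def epsR (l d : ℕ) (i : Fin l) : Fin l × Fin d → ℝ := ∑ j, eR l d (i, j)

/-- The real span of the relations `ε_i - ε_{i'}`. -/
def LR (l d : ℕ) : Submodule ℝ (Fin l × Fin d → ℝ) :=
  Submodule.span ℝ (Set.range fun p : Fin l × Fin l => epsR l d p.1 - epsR l d p.2)

/-- `M_ℝ = ℝ^{ld} / L_ℝ`. -/
abbrev MR (l d : ℕ) := (Fin l × Fin d → ℝ) ⧸ LR l d

/-- Image of `e_{ij}` in `M_ℝ`. -/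
noncomputable def ebar (l d : ℕ) (p : Fin l × Fin d) : MR l d := (LR l d).mkQ (eR l d p)

/-- The common image `ε` of the `ε_i` in `M_ℝ`. -/
noncomputable def epsbar (l d : ℕ) (hl : 0 < l) : MR l d :=
  (LR l d).mkQ (epsR l d ⟨0, hl⟩)

/-- The cone `σ^∨ ⊆ M_ℝ` spanned by the images of the `e_{ij}`. -/
def sigmaDual (l d : ℕ) : Set (MR l d) :=
  {x | ∃ c : Fin l × Fin d → ℝ, (∀ p, 0 ≤ c p) ∧ x = ∑ p, c p • ebar l d p}

/-- The chamber `τ̃_ĵ = span_{≥0}(τ_ĵ, ε) ⊆ σ^∨`. -/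
noncomputable def chamber (l d : ℕ) (hl : 0 < l) (jv : Fin l → Fin d) : Set (MR l d) :=
  {x | ∃ (c0 : ℝ) (c : Fin l × Fin d → ℝ), 0 ≤ c0 ∧ (∀ p, 0 ≤ c p) ∧
    (∀ i : Fin l, c (i, jv i) = 0) ∧ x = c0 • epsbar l d hl + ∑ p, c p • ebar l d p}

lemma epsR_apply (l d : ℕ) (i' i : Fin l) (j : Fin d) :
    epsR l d i' (i, j) = if i = i' then 1 else 0 := by
  unfold epsR eR
  simp only [Finset.sum_apply, Pi.single_apply, Prod.mk.injEq]
  by_cases h : i = i' <;> simp [h]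

lemma LR_const {l d : ℕ} {v : Fin l × Fin d → ℝ} (hv : v ∈ LR l d)
    (i : Fin l) (j j' : Fin d) : v (i, j) = v (i, j') := by
  induction hv using Submodule.span_induction with
  | mem x hx =>
    obtain ⟨p, rfl⟩ := hx
    simp [Pi.sub_apply, epsR_apply]
  | zero => simp
  | add x y hx hy ihx ihy => simp [Pi.add_apply, ihx, ihy]
  | smul r x hx ih => simp [Pi.smul_apply, ih]

lemma pi_rep (l d : ℕ) (x : Fin l × Fin d → ℝ) : x = ∑ p, x p • eR l d p := by
  funext q
  simp [eR, Finset.sum_apply, Pi.single_apply]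

lemma mkQ_rep (l d : ℕ) (x : Fin l × Fin d → ℝ) :
    (LR l d).mkQ x = ∑ p, x p • ebar l d p := by
  conv_lhs => rw [pi_rep l d x]
  simp [ebar, map_sum]

/-- The piecewise-linear function `φ` on `σ^∨`, defined on the chamber `τ̃_ĵ` by the linear
functional `φ_ĵ`, is well defined and is given on `u = ∑ a_{ij} e_{ij}` by
`φ(u) = ∑_i min_j a_{ij}`: on each chamber, `φ_ĵ` evaluates to this chamber-independent
formula. -/
theorem stmt_9 (l d : ℕ) (hl : 2 ≤ l) (hd : 2 ≤ d)
    (jv : Fin l → Fin d) (φ : MR l d →ₗ[ℝ] ℝ)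
    (hφ1 : φ (epsbar l d (by omega)) = 1)
    (hφ0 : ∀ (i : Fin l) (j : Fin d), j ≠ jv i → φ (ebar l d (i, j)) = 0)
    (a : Fin l × Fin d → ℝ)
    (hmem : (LR l d).mkQ a ∈ chamber l d (by omega) jv) :
    φ ((LR l d).mkQ a) = ∑ i : Fin l, ⨅ j : Fin d, a (i, j) := by
  haveI : Nonempty (Fin d) := ⟨⟨0, by omega⟩⟩
  have hl0 : 0 < l := by omega
  obtain ⟨c0, c, hc0, hc, hcj, heq⟩ := hmem
  have heps : ∀ i : Fin l, (LR l d).mkQ (epsR l d i) = epsbar l d hl0 := by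
    intro i
    rw [epsbar, ← sub_eq_zero, ← map_sub, Submodule.mkQ_apply,
      Submodule.Quotient.mk_eq_zero]
    exact Submodule.subset_span ⟨(i, ⟨0, hl0⟩), rfl⟩
  have hone : ∀ i : Fin l, φ (ebar l d (i, jv i)) = 1 := by
    intro i
    have hsum : ∑ j : Fin d, φ (ebar l d (i, j)) = 1 := by
      have h1 : (LR l d).mkQ (epsR l d i) = ∑ j, ebar l d (i, j) := by
        rw [epsR, map_sum]; rfl
      rw [← map_sum, ← h1, heps, hφ1]
    rwa [Finset.sum_eq_single (jv i) (fun j _ hj => hφ0 i j hj) (by simp)] at hsum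
  have hval : φ ((LR l d).mkQ a) = ∑ i : Fin l, a (i, jv i) := by
    rw [mkQ_rep, map_sum]
    simp only [map_smul, smul_eq_mul]
    rw [Fintype.sum_prod_type]
    refine Finset.sum_congr rfl fun i _ => ?_
    rw [Finset.sum_eq_single (jv i) (fun j _ hj => by rw [hφ0 i j hj, mul_zero])
      (by simp), hone, mul_one]
  have hLR : a - (c0 • epsR l d ⟨0, hl0⟩ + c) ∈ LR l d := by
    rw [← Submodule.Quotient.mk_eq_zero, ← Submodule.mkQ_apply, map_sub,
      sub_eq_zero, map_add, map_smul]
    rw [heq, mkQ_rep l d c, epsbar]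
  have hkey : ∀ (i : Fin l) (j : Fin d), a (i, jv i) ≤ a (i, j) := by
    intro i j
    have h := LR_const hLR i j (jv i)
    simp only [Pi.sub_apply, Pi.add_apply, Pi.smul_apply, smul_eq_mul] at h
    have he : epsR l d ⟨0, hl0⟩ (i, j) = epsR l d ⟨0, hl0⟩ (i, jv i) := by
      rw [epsR_apply, epsR_apply]
    have hcij := hc (i, j)
    have hciji := hcj i
    nlinarith [h, he]
  have hinf : ∀ i : Fin l, (⨅ j : Fin d, a (i, j)) = a (i, jv i) := by
    intro i
    exact le_antisymm (ciInf_le (Finite.bddBelow_range _) (jv i))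
      (le_ciInf fun j => hkey i j)
  rw [hval]
  exact Finset.sum_congr rfl fun i _ => (hinf i).symm
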